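/- Marginal consistency makes the phenomenological hidden time-reversal generator a MJPG (Theorem 'mtc' / Eq. (unitary) for phenomenological currents): Under the phenomenological setup with marginal consistency, the matrix P * (M Q)ᵀ * P⁻¹ has nonnegative off-diagonal entries and every column summing to zero, i.e. it is a Markov jump-process generator. -/
import Mathlib


open Matrix

/-- Marginal consistency makes the phenomenological hidden time-reversal generator
a Markov jump-process generator (Theorem "mtc" / Eq. (unitary)). -/
theorem phenomenological_hidden_TR_is_MJPG {n m : ℕ}
    (W Whid : Matrix (Fin n) (Fin n) ℝ)
    (hW1 : ∀ i j, i ≠ j → 0 ≤ W i j)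
    (hW2 : ∀ j, ∑ i, W i j = 0)
    (E : Finset (Fin n × Fin n))
    (hEsymm : ∀ i j, (i, j) ∈ E → (j, i) ∈ E)
    (hEne : ∀ i j, (i, j) ∈ E → i ≠ j)
    (hEpos : ∀ i j, (i, j) ∈ E → 0 < W i j)
    (hH1 : ∀ i j, (i, j) ∈ E → Whid i j = 0)
    (hH2 : ∀ i, Whid i i = W i i + ∑ j ∈ Finset.univ.filter (fun j => (j, i) ∈ E), W j i)
    (hH3 : ∀ i j, i ≠ j → (i, j) ∉ E → Whid i j = W i j)
    (p : Fin n → ℝ) (hp1 : ∀ i, 0 < p i) (hp2 : ∑ i, p i = 1)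
    (hp3 : Whid *ᵥ p = 0)
    (φ : Fin m → Fin n → Fin n → ℝ)
    (hφ1 : ∀ μ i j, φ μ i j = -φ μ j i)
    (hφ2 : ∀ μ i j, (i, j) ∉ E → φ μ i j = 0)
    (Q : Fin m → ℝ)
    (hmc : ∀ i j, (i, j) ∈ E →
      Real.log (W i j * p j / (W j i * p i)) = ∑ μ, Q μ * φ μ i j)
    (M : (Fin m → ℝ) → Matrix (Fin n) (Fin n) ℝ)
    (hM1 : ∀ q i j, i ≠ j → M q i j = W i j * Real.exp (-(∑ μ, q μ * φ μ i j)))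
    (hM2 : ∀ q i, M q i i = W i i) :
    (∀ i j, i ≠ j →
      0 ≤ (Matrix.diagonal p * (M Q)ᵀ * (Matrix.diagonal p)⁻¹) i j) ∧
    (∀ j, ∑ i, (Matrix.diagonal p * (M Q)ᵀ * (Matrix.diagonal p)⁻¹) i j = 0) := by
  have hpne : ∀ i, p i ≠ 0 := fun i => (hp1 i).ne'
  have hinv : (Matrix.diagonal p)⁻¹ = Matrix.diagonal (fun i => (p i)⁻¹) := by
    apply Matrix.inv_eq_right_inv
    rw [Matrix.diagonal_mul_diagonal]
    have : (fun i => p i * (p i)⁻¹) = fun _ : Fin n => (1 : ℝ) :=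
      funext fun i => mul_inv_cancel₀ (hpne i)
    rw [this]
    rfl
  have hentry : ∀ i j, (Matrix.diagonal p * (M Q)ᵀ * (Matrix.diagonal p)⁻¹) i j
      = p i * M Q j i * (p j)⁻¹ := by
    intro i j
    rw [hinv]
    simp [Matrix.mul_diagonal, Matrix.diagonal_mul, Matrix.transpose_apply]
  have hkey : ∀ i j, (j, i) ∈ E → p i * M Q j i = W i j * p j := by
    intro i j hji
    have hij : (i, j) ∈ E := hEsymm j i hji
    have hne : j ≠ i := hEne j i hji
    have hWji : 0 < W j i := hEpos j i hji
    have hWij : 0 < W i j := hEpos i j hij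
    have h1 : 0 < W j i * p i / (W i j * p j) :=
      div_pos (mul_pos hWji (hp1 i)) (mul_pos hWij (hp1 j))
    have hexp : Real.exp (∑ μ, Q μ * φ μ j i) = W j i * p i / (W i j * p j) := by
      rw [← hmc j i hji, Real.exp_log h1]
    rw [hM1 Q j i hne, Real.exp_neg, hexp]
    have h2 : p i ≠ 0 := hpne i
    have h3 : W j i ≠ 0 := hWji.ne'
    rw [inv_div]
    field_simp
  constructor
  · intro i j hij
    rw [hentry, hM1 Q j i (Ne.symm hij)]
    exact mul_nonneg (mul_nonneg (hp1 i).le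
      (mul_nonneg (hW1 j i (Ne.symm hij)) (Real.exp_pos _).le))
      (inv_nonneg.mpr (hp1 j).le)
  · intro j
    have hmv : ∑ i, Whid j i * p i = 0 := by
      have := congrFun hp3 j
      simpa [Matrix.mulVec, dotProduct] using this
    have hsum : ∑ i, p i * M Q j i = 0 := by
      have hsplitM : ∑ i, p i * M Q j i = p j * M Q j j
          + ((∑ i ∈ (Finset.univ.erase j).filter (fun i => (j, i) ∈ E), p i * M Q j i)
           + ∑ i ∈ (Finset.univ.erase j).filter (fun i => ¬ (j, i) ∈ E), p i * M Q j i) := by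
        rw [Finset.sum_filter_add_sum_filter_not]
        exact (Finset.add_sum_erase _ _ (Finset.mem_univ j)).symm
      have hsplitH : ∑ i, Whid j i * p i = Whid j j * p j
          + ((∑ i ∈ (Finset.univ.erase j).filter (fun i => (j, i) ∈ E), Whid j i * p i)
           + ∑ i ∈ (Finset.univ.erase j).filter (fun i => ¬ (j, i) ∈ E), Whid j i * p i) := by
        rw [Finset.sum_filter_add_sum_filter_not]
        exact (Finset.add_sum_erase _ _ (Finset.mem_univ j)).symm
      have hA : ∑ i ∈ (Finset.univ.erase j).filter (fun i => (j, i) ∈ E), p i * M Q j i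
          = ∑ i ∈ (Finset.univ.erase j).filter (fun i => (j, i) ∈ E), W i j * p j := by
        refine Finset.sum_congr rfl fun i hi => ?_
        exact hkey i j (Finset.mem_filter.mp hi).2
      have hB : ∑ i ∈ (Finset.univ.erase j).filter (fun i => ¬ (j, i) ∈ E), p i * M Q j i
          = ∑ i ∈ (Finset.univ.erase j).filter (fun i => ¬ (j, i) ∈ E), Whid j i * p i := by
        refine Finset.sum_congr rfl fun i hi => ?_
        obtain ⟨hi1, hi2⟩ := Finset.mem_filter.mp hi
        have hij : i ≠ j := Finset.ne_of_mem_erase hi1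
        rw [hM1 Q j i (Ne.symm hij), hH3 j i (Ne.symm hij) hi2]
        have hz : ∀ μ, Q μ * φ μ j i = 0 := fun μ => by rw [hφ2 μ j i hi2, mul_zero]
        rw [Finset.sum_congr rfl fun μ _ => hz μ, Finset.sum_const, smul_zero, neg_zero,
          Real.exp_zero, mul_one, mul_comm]
      have hA' : ∑ i ∈ (Finset.univ.erase j).filter (fun i => (j, i) ∈ E), Whid j i * p i
          = 0 := by
        refine Finset.sum_eq_zero fun i hi => ?_
        rw [hH1 j i (Finset.mem_filter.mp hi).2, zero_mul]
      have hsets : (Finset.univ.erase j).filter (fun i => (j, i) ∈ E)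
          = Finset.univ.filter (fun k => (k, j) ∈ E) := by
        ext i
        simp only [Finset.mem_filter, Finset.mem_erase, Finset.mem_univ, true_and, and_true]
        constructor
        · rintro ⟨-, h⟩; exact hEsymm j i h
        · intro h; exact ⟨hEne i j h, hEsymm i j h⟩
      have hAv : ∑ i ∈ (Finset.univ.erase j).filter (fun i => (j, i) ∈ E), W i j * p j
          = (∑ k ∈ Finset.univ.filter (fun k => (k, j) ∈ E), W k j) * p j := by
        rw [hsets, Finset.sum_mul]
      rw [hsplitM, hA, hB, hAv, hM2]
      rw [hsplitH, hA', hH2 j] at hmv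
      linarith
    calc ∑ i, (Matrix.diagonal p * (M Q)ᵀ * (Matrix.diagonal p)⁻¹) i j
        = ∑ i, p i * M Q j i * (p j)⁻¹ := by simp only [hentry]
      _ = (∑ i, p i * M Q j i) * (p j)⁻¹ := by rw [Finset.sum_mul]
      _ = 0 := by rw [hsum, zero_mul]
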